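/- arXiv:2008.06213 — 2 statements merged into one kernel-verified Lean document; each statement's English description precedes it below -/
import Mathlib

section
/- The prior distribution π(γ) = B(|γ|+1, p+q−|γ|+1) / 2^{#{j : γ_j^x > 0}} on configurations γ = (γ^x, γ^z) induces a uniform distribution on the number of included predictors: for every k with 0 ≤ k ≤ p+q, the sum of π(γ) over all configurations γ with |γ| = k equals 1/(p+q+1). -/
open Finset

/-- The Beta function `B(a,b) = ∫₀¹ t^(a-1) (1-t)^(b-1) dt`. -/
noncomputable def Beta (a b : ℝ) : ℝ :=
  ∫ t in (0:ℝ)..1, t ^ (a - 1) * (1 - t) ^ (b - 1)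

/-- Number of active (nonzero) components of `γˣ`, i.e. `#{j : γⱼˣ > 0}`. -/
def nActive {p : ℕ} (γx : Fin p → Fin 3) : ℕ :=
  (univ.filter fun j => 0 < (γx j : ℕ)).card

/-- The number of included predictors `|γ| = #{j : γⱼˣ > 0} + ∑ₖ γₖᶻ`. -/
def gammaSize {p q : ℕ} (γ : (Fin p → Fin 3) × (Fin q → Fin 2)) : ℕ :=
  nActive γ.1 + ∑ k, (γ.2 k : ℕ)

/-- The prior `π(γ) = B(|γ|+1, p+q-|γ|+1) / 2^{#{j : γⱼˣ > 0}}`. -/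
noncomputable def prior (p q : ℕ) (γ : (Fin p → Fin 3) × (Fin q → Fin 2)) : ℝ :=
  Beta ((gammaSize γ : ℝ) + 1) ((p : ℝ) + (q : ℝ) - (gammaSize γ : ℝ) + 1) /
    2 ^ nActive γ.1

/-!
On configurations of size `k` the Beta factor is the constant `k! (n-k)! / (n+1)!`, `n = p + q`,
so it suffices that the weights `2^{-#{j : γⱼˣ > 0}}` of these configurations add up to
`choose n k`. That sum is the coefficient of `X^k` in `∑_γ 2^{-#{j : γⱼˣ > 0}} X^{|γ|}`, which
factors over coordinates: each `γⱼˣ` contributes `1 + 2 · X/2` and each `γₖᶻ` contributes `1 + X`,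
so the generating function is `(1 + X)^n`.
-/

open Polynomial
open scoped Nat

lemma Beta_eq_Gamma_mul_div {a b : ℝ} (ha : 0 < a) (hb : 0 < b) :
    Beta a b = Real.Gamma a * Real.Gamma b / Real.Gamma (a + b) := by
  have hcast : (Beta a b : ℂ) = Complex.betaIntegral a b := by
    rw [Beta, Complex.betaIntegral, ← intervalIntegral.integral_ofReal]
    refine intervalIntegral.integral_congr fun t ht => ?_
    rw [Set.uIcc_of_le zero_le_one] at ht
    simp [Complex.ofReal_cpow ht.1, Complex.ofReal_cpow (sub_nonneg.2 ht.2)]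
  apply Complex.ofReal_injective
  rw [hcast, Complex.betaIntegral_eq_Gamma_mul_div _ _ (by simpa) (by simpa)]
  simp [← Complex.Gamma_ofReal]

lemma Beta_natCast_add_one (k m : ℕ) :
    Beta (k + 1) (m + 1) = k ! * m ! / (k + m + 1)! := by
  have hsum : ((k : ℝ) + 1) + ((m : ℝ) + 1) = ((k + m + 1 : ℕ) : ℝ) + 1 := by
    push_cast; ring
  rw [Beta_eq_Gamma_mul_div (by positivity) (by positivity), hsum, Real.Gamma_nat_eq_factorial,
    Real.Gamma_nat_eq_factorial, Real.Gamma_nat_eq_factorial]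

section GeneratingFunctions

variable {R : Type*} [CommSemiring R]

lemma sum_pow_sum_fin_two (q : ℕ) (Y : R) :
    ∑ z : Fin q → Fin 2, Y ^ (∑ k, (z k : ℕ)) = (1 + Y) ^ q := by
  simp only [← Finset.prod_pow_eq_pow_sum]
  rw [← Fintype.prod_sum (fun _ (c : Fin 2) => Y ^ (c : ℕ))]
  simp [Fin.sum_univ_two]

lemma sum_pow_nActive (p : ℕ) (Y : R) :
    ∑ x : Fin p → Fin 3, Y ^ nActive x = (1 + 2 * Y) ^ p := by
  have hpow (x : Fin p → Fin 3) :
      Y ^ nActive x = ∏ j, Y ^ (if 0 < (x j : ℕ) then 1 else 0) := by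
    rw [Finset.prod_pow_eq_pow_sum, ← Finset.card_filter, nActive]
  simp only [hpow]
  rw [← Fintype.prod_sum (fun _ (c : Fin 3) => Y ^ (if 0 < (c : ℕ) then 1 else 0))]
  simp [Fin.sum_univ_three]
  ring

end GeneratingFunctions

lemma sum_C_mul_X_pow_gammaSize (p q : ℕ) :
    ∑ γ : (Fin p → Fin 3) × (Fin q → Fin 2), C ((2⁻¹ : ℝ) ^ nActive γ.1) * X ^ gammaSize γ
      = (1 + X) ^ (p + q) := by
  have hsplit (γ : (Fin p → Fin 3) × (Fin q → Fin 2)) :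
      C ((2⁻¹ : ℝ) ^ nActive γ.1) * X ^ gammaSize γ
        = (C 2⁻¹ * X) ^ nActive γ.1 * X ^ ∑ k, (γ.2 k : ℕ) := by
    rw [gammaSize, pow_add, mul_pow, C_pow, mul_assoc]
  have htwo : (2 : ℝ[X]) * C 2⁻¹ = 1 := by
    rw [← C_ofNat, ← C_mul, mul_inv_cancel₀ two_ne_zero, C_1]
  simp_rw [hsplit, Fintype.sum_prod_type, ← Finset.mul_sum, ← Finset.sum_mul,
    sum_pow_sum_fin_two, sum_pow_nActive, ← mul_assoc, htwo, one_mul, pow_add]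

lemma sum_inv_two_pow_nActive_filter_gammaSize_eq_choose (p q k : ℕ) :
    ∑ γ ∈ univ.filter (fun γ : (Fin p → Fin 3) × (Fin q → Fin 2) => gammaSize γ = k),
      (2⁻¹ : ℝ) ^ nActive γ.1 = (p + q).choose k := by
  have := congrArg (coeff · k) (sum_C_mul_X_pow_gammaSize p q)
  simpa [finsetSum_coeff, coeff_C_mul_X_pow, coeff_one_add_X_pow, Finset.sum_filter,
    eq_comm] using this

/-- The prior induces a uniform distribution on the number of included predictors:
for every `0 ≤ k ≤ p + q`, `Pr(|γ| = k) = 1/(p+q+1)`. -/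
theorem prior_size_uniform (p q k : ℕ) (hk : k ≤ p + q) :
    ∑ γ ∈ univ.filter (fun γ : (Fin p → Fin 3) × (Fin q → Fin 2) => gammaSize γ = k),
      prior p q γ = 1 / ((p : ℝ) + (q : ℝ) + 1) := by
  have hprior : ∀ γ ∈ univ.filter
      (fun γ : (Fin p → Fin 3) × (Fin q → Fin 2) => gammaSize γ = k),
      prior p q γ = Beta (k + 1) ((p + q - k : ℕ) + 1) * (2⁻¹ : ℝ) ^ nActive γ.1 := by
    intro γ hγ
    rw [prior, (Finset.mem_filter.1 hγ).2, Nat.cast_sub hk, Nat.cast_add, div_eq_mul_inv, inv_pow]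
  rw [Finset.sum_congr rfl hprior, ← Finset.mul_sum,
    sum_inv_two_pow_nActive_filter_gammaSize_eq_choose, Beta_natCast_add_one, Nat.cast_choose ℝ hk, Nat.add_sub_of_le hk, Nat.factorial_succ]
  push_cast
  field_simp
end

section
/- Under the prior π(γ) = B(|γ|+1, p+q−|γ|+1) / 2^{#{j : γ_j^x > 0}}, for each fixed index j with 1 ≤ j ≤ p, the marginal probabilities of a linear and of a nonlinear effect are equal and both equal 1/4; that is, the sum of π(γ) over all configurations γ with γ_j^x = 1 equals 1/4, and likewise the sum over all configurations with γ_j^x = 2 equals 1/4. -/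
open Finset

/-!
Since `B(m+1, n+1) = ∫₀¹ tᵐ (1-t)ⁿ dt`, the prior is a mixture over `t ∈ [0,1]` of product
distributions: each `x`-coordinate is `0` with weight `1-t` and `1` or `2` with weight `t/2`
each, and each `z`-coordinate is `0` or `1` with weights `1-t` and `t`. At fixed `t` every
coordinate's weights sum to `1`, so the configurations with `γⱼˣ = c ≠ 0` carry total weight
`t/2`, and `∫₀¹ t/2 dt = 1/4`.
-/

theorem Fintype.prod_ite_eq_pow_mul_pow {ι M : Type*} [Fintype ι] [CommMonoid M] (P : ι → Prop)
    [DecidablePred P] (a b : M) :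
    ∏ i, (if P i then a else b) = a ^ #{i | P i} * b ^ (Fintype.card ι - #{i | P i}) := by
  have hcard := card_filter_add_card_filter_not (s := univ) P
  rw [card_univ] at hcard
  rw [prod_ite, prod_const, prod_const, ← hcard, Nat.add_sub_cancel_left]

theorem Fintype.sum_filter_apply_eq_of_sum_eq_one {ι α R : Type*} [Fintype ι] [DecidableEq ι]
    [Fintype α] [DecidableEq α] [CommSemiring R] {f : ι → α → R} (hf : ∀ i, ∑ a, f i a = 1)
    (j : ι) (c : α) :
    ∑ x ∈ univ.filter (fun x : ι → α => x j = c), ∏ i, f i (x i) = f j c := by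
  -- Zeroing `f j` off `c` makes the constrained sum an unconstrained one, which factorizes.
  let g : ι → α → R := fun i a => if i = j ∧ a ≠ c then 0 else f i a
  have hg (x : ι → α) : ∏ i, g i (x i) = if x j = c then ∏ i, f i (x i) else 0 := by
    split_ifs with hx
    · exact Finset.prod_congr rfl fun i _ => if_neg fun h : i = j ∧ x i ≠ c => h.2 (h.1 ▸ hx)
    · exact Finset.prod_eq_zero (mem_univ j) (if_pos ⟨rfl, hx⟩)
  have hsum (i : ι) : ∑ a, g i a = if i = j then f j c else 1 := by
    split_ifs with hi
    · subst hi; simp [g]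
    · simp [g, hi, hf]
  calc _ = ∑ x : ι → α, ∏ i, g i (x i) := by simp_rw [hg, sum_filter]
    _ = ∏ i, ∑ a, g i a := (Fintype.prod_sum g).symm
    _ = f j c := by simp_rw [hsum]; exact Fintype.prod_ite_eq' j _

theorem Fintype.sum_prod_eq_one_of_sum_eq_one {ι α R : Type*} [Fintype ι] [DecidableEq ι]
    [Fintype α] [CommSemiring R] {f : ι → α → R} (hf : ∀ i, ∑ a, f i a = 1) :
    ∑ x : ι → α, ∏ i, f i (x i) = 1 := by
  rw [← Fintype.prod_sum]; simp [hf]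

theorem Fin.sum_val_eq_card_filter_pos {ι : Type*} [Fintype ι] (x : ι → Fin 2) :
    ∑ i, (x i : ℕ) = #{i | 0 < (x i : ℕ)} := by
  have hval (b : Fin 2) : (b : ℕ) = if 0 < (b : ℕ) then 1 else 0 := by fin_cases b <;> rfl
  rw [card_filter]
  exact sum_congr rfl fun i _ => hval (x i)

theorem gammaSize_eq_card_add_card {p q : ℕ} (γ : (Fin p → Fin 3) × (Fin q → Fin 2)) :
    gammaSize γ = #{i | 0 < (γ.1 i : ℕ)} + #{k | 0 < (γ.2 k : ℕ)} := by
  rw [gammaSize, nActive, Fin.sum_val_eq_card_filter_pos]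

theorem gammaSize_le {p q : ℕ} (γ : (Fin p → Fin 3) × (Fin q → Fin 2)) :
    gammaSize γ ≤ p + q := by
  rw [gammaSize_eq_card_add_card]
  exact add_le_add ((card_filter_le _ _).trans_eq (card_fin p))
    ((card_filter_le _ _).trans_eq (card_fin q))

theorem Beta_natCast_add_one_s2 (m n : ℕ) :
    Beta (m + 1) (n + 1) = ∫ t in (0:ℝ)..1, t ^ m * (1 - t) ^ n := by
  simp only [Beta, add_sub_cancel_right, Real.rpow_natCast]

noncomputable def xWeight (t : ℝ) (a : Fin 3) : ℝ := if 0 < (a : ℕ) then t / 2 else 1 - t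

noncomputable def zWeight (t : ℝ) (b : Fin 2) : ℝ := if 0 < (b : ℕ) then t else 1 - t

noncomputable def configWeight {p q : ℕ} (t : ℝ) (γ : (Fin p → Fin 3) × (Fin q → Fin 2)) : ℝ :=
  (∏ i, xWeight t (γ.1 i)) * ∏ k, zWeight t (γ.2 k)

theorem sum_xWeight (t : ℝ) : ∑ a, xWeight t a = 1 := by
  rw [Fin.sum_univ_three]; norm_num [xWeight]; ring

theorem sum_zWeight (t : ℝ) : ∑ b, zWeight t b = 1 := by
  simp [zWeight, Fin.sum_univ_two]

theorem continuous_xWeight (a : Fin 3) : Continuous (xWeight · a) := by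
  unfold xWeight; split_ifs <;> fun_prop

theorem continuous_zWeight (b : Fin 2) : Continuous (zWeight · b) := by
  unfold zWeight; split_ifs <;> fun_prop

theorem continuous_configWeight {p q : ℕ} (γ : (Fin p → Fin 3) × (Fin q → Fin 2)) :
    Continuous fun t => configWeight t γ :=
  (continuous_finsetProd _ fun i _ => continuous_xWeight (γ.1 i)).mul
    (continuous_finsetProd _ fun k _ => continuous_zWeight (γ.2 k))

theorem configWeight_eq {p q : ℕ} (t : ℝ) (γ : (Fin p → Fin 3) × (Fin q → Fin 2)) :
    configWeight t γ = t ^ gammaSize γ * (1 - t) ^ (p + q - gammaSize γ) / 2 ^ nActive γ.1 := by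
  simp only [configWeight, xWeight, zWeight, Fintype.prod_ite_eq_pow_mul_pow, Fintype.card_fin,
    gammaSize_eq_card_add_card, nActive]
  set A := #{i | 0 < (γ.1 i : ℕ)}
  set B := #{k | 0 < (γ.2 k : ℕ)}
  have hA : A ≤ p := (card_filter_le _ _).trans_eq (card_fin p)
  have hB : B ≤ q := (card_filter_le _ _).trans_eq (card_fin q)
  rw [show p + q - (A + B) = (p - A) + (q - B) by omega, pow_add, pow_add, div_pow]
  ring

theorem prior_eq_integral_configWeight {p q : ℕ} (γ : (Fin p → Fin 3) × (Fin q → Fin 2)) :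
    prior p q γ = ∫ t in (0:ℝ)..1, configWeight t γ := by
  have hcast : (p : ℝ) + q - gammaSize γ = ((p + q - gammaSize γ : ℕ) : ℝ) := by
    rw [Nat.cast_sub (gammaSize_le γ)]; push_cast; ring
  simp_rw [prior, hcast, Beta_natCast_add_one_s2, configWeight_eq, intervalIntegral.integral_div]

theorem sum_filter_configWeight {p q : ℕ} (t : ℝ) (j : Fin p) {c : Fin 3} (hc : c ≠ 0) :
    ∑ γ ∈ univ.filter (fun γ : (Fin p → Fin 3) × (Fin q → Fin 2) => γ.1 j = c),
      configWeight t γ = t / 2 := by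
  rw [← univ_product_univ, filter_product_left fun x : Fin p → Fin 3 => x j = c, sum_product]
  simp_rw [configWeight, ← mul_sum,
    Fintype.sum_prod_eq_one_of_sum_eq_one fun _ => sum_zWeight t, mul_one]
  rw [Fintype.sum_filter_apply_eq_of_sum_eq_one fun _ => sum_xWeight t, xWeight,
    if_pos (Nat.pos_of_ne_zero (Fin.val_ne_iff.2 hc))]

theorem sum_filter_prior {p q : ℕ} (j : Fin p) {c : Fin 3} (hc : c ≠ 0) :
    ∑ γ ∈ univ.filter (fun γ : (Fin p → Fin 3) × (Fin q → Fin 2) => γ.1 j = c),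
      prior p q γ = 1 / 4 := by
  simp_rw [prior_eq_integral_configWeight]
  rw [← intervalIntegral.integral_finsetSum
    fun γ _ => (continuous_configWeight γ).intervalIntegrable 0 1]
  simp_rw [sum_filter_configWeight _ j hc, intervalIntegral.integral_div, integral_id]
  norm_num

theorem prior_marginal_x_one_two_general (p q : ℕ) (j : Fin p) :
    (∑ γ ∈ univ.filter (fun γ : (Fin p → Fin 3) × (Fin q → Fin 2) => γ.1 j = 1),
      prior p q γ = 1 / 4) ∧
    (∑ γ ∈ univ.filter (fun γ : (Fin p → Fin 3) × (Fin q → Fin 2) => γ.1 j = 2),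
      prior p q γ = 1 / 4) :=
  ⟨sum_filter_prior j one_ne_zero, sum_filter_prior j (by decide)⟩

/-- For each fixed index `j`, the marginal probabilities of a linear effect (`γⱼˣ = 1`)
and of a nonlinear effect (`γⱼˣ = 2`) both equal `1/4`. -/
theorem prior_marginal_x_one_two (p q : ℕ) (hp : 1 ≤ p) (j : Fin p) :
    (∑ γ ∈ univ.filter (fun γ : (Fin p → Fin 3) × (Fin q → Fin 2) => γ.1 j = 1),
      prior p q γ = 1 / 4) ∧
    (∑ γ ∈ univ.filter (fun γ : (Fin p → Fin 3) × (Fin q → Fin 2) => γ.1 j = 2),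
      prior p q γ = 1 / 4) :=
  prior_marginal_x_one_two_general p q j
end
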